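/- arXiv:1809.05287 — 2 statements merged into one kernel-verified Lean document; each statement's English description precedes it below -/
import Mathlib

section
/- In a d-tiling T, for any box A ∈ T and any point p ∈ A such that p_i = A_i^- (resp. p_i = A_i^+) for some i ∈ {1,…,d}, there exists a box B ∈ T ∪ T_ext such that p ∈ A ∩ B and such that A_j ∩ B_j is degenerate only for j = i; in particular dim(A ∩ B) = d − 1. -/
/- Common framework: axis-parallel boxes (with extended-real endpoints, to
accommodate the unbounded exterior boxes of `T_ext`), `d`-tilings of the cube
`[-1,1]^d`, the exterior boxes, proper tilings, slices, cuts, sides and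
separations. -/

noncomputable section

open Classical

attribute [local instance] Classical.propDecidable

/-- A `d`-box, given by the lower and upper endpoints of its coordinate
intervals (extended reals, so that the unbounded exterior boxes are covered).
The interval in coordinate `i` is `[lo i, hi i]`. -/
structure Box (d : ℕ) where
  lo : Fin d → EReal
  hi : Fin d → EReal

namespace Box

variable {d : ℕ}

/-- Membership of a (real) point in a box. -/
def mem (B : Box d) (p : Fin d → ℝ) : Prop :=
  ∀ i, B.lo i ≤ (p i : EReal) ∧ (p i : EReal) ≤ B.hi i

/-- The set of real points of a box. -/
def toSet (B : Box d) : Set (Fin d → ℝ) := {p | B.mem p}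

/-- The interior of a box (for full-dimensional boxes). -/
def interior (B : Box d) : Set (Fin d → ℝ) :=
  {p | ∀ i, B.lo i < (p i : EReal) ∧ (p i : EReal) < B.hi i}

/-- The dimension of a box: the number of non-degenerate coordinate
intervals. -/
def dim (B : Box d) : ℕ :=
  (Finset.univ.filter fun i => B.lo i < B.hi i).card

/-- A box is full-dimensional (`d`-dimensional) if all of its coordinate
intervals are non-degenerate. -/
def FullDim (B : Box d) : Prop := ∀ i, B.lo i < B.hi i

end Box

/-- Two boxes intersect when they share a (real) point. -/
def Intersects {d : ℕ} (A B : Box d) : Prop := (A.toSet ∩ B.toSet).Nonempty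

/-- The dimension of the intersection `A ∩ B` of two boxes: the number of
coordinates `i` where the interval `A_i ∩ B_i` is non-degenerate. -/
def interDim {d : ℕ} (A B : Box d) : ℕ :=
  (Finset.univ.filter fun i =>
    max (A.lo i) (B.lo i) < min (A.hi i) (B.hi i)).card

/-- Two intersecting boxes touch in dimension `i` when `A_i ∩ B_i` is
degenerate. -/
def Touch {d : ℕ} (A B : Box d) (i : Fin d) : Prop :=
  Intersects A B ∧ max (A.lo i) (B.lo i) = min (A.hi i) (B.hi i)

/-- The cube `[-1,1]^d`. -/
def cube (d : ℕ) : Set (Fin d → ℝ) := {p | ∀ i, -1 ≤ p i ∧ p i ≤ 1}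

/-- A `d`-tiling: a finite collection of full-dimensional `d`-boxes contained
in `[-1,1]^d`, with pairwise disjoint interiors, whose union is `[-1,1]^d`. -/
def IsTiling {d : ℕ} (𝒯 : Finset (Box d)) : Prop :=
  (∀ B ∈ 𝒯, B.FullDim) ∧
  (∀ B ∈ 𝒯, B.toSet ⊆ cube d) ∧
  (∀ A ∈ 𝒯, ∀ B ∈ 𝒯, A ≠ B → A.interior ∩ B.interior = ∅) ∧
  (∀ p ∈ cube d, ∃ B ∈ 𝒯, B.mem p)

/-- The exterior box `T(i,-)` (for `s = false`) resp. `T(i,+)`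
(for `s = true`). -/
def extBox (d : ℕ) (i : Fin d) (s : Bool) : Box d where
  lo j := if j < i then ((-1 : ℝ) : EReal)
          else if j = i then (if s then ((1 : ℝ) : EReal) else ⊥) else ⊥
  hi j := if j < i then ((1 : ℝ) : EReal)
          else if j = i then (if s then ⊤ else ((-1 : ℝ) : EReal)) else ⊤

/-- The family `T_ext` of the `2d` exterior boxes. -/
def extBoxes (d : ℕ) : Finset (Box d) :=
  (Finset.univ : Finset (Fin d × Bool)).image fun q => extBox d q.1 q.2

/-- The collection `T ∪ T_ext`. -/
def withExt {d : ℕ} (𝒯 : Finset (Box d)) : Finset (Box d) := 𝒯 ∪ extBoxes d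

/-- A `d`-tiling is proper when every point of `ℝ^d` belongs to at most `d+1`
boxes of `T ∪ T_ext`. -/
def Proper {d : ℕ} (𝒯 : Finset (Box d)) : Prop :=
  ∀ p : Fin d → ℝ, ((withExt 𝒯).filter fun B => B.mem p).card ≤ d + 1

/-- The hyperplane `H^(i)_x` is generic w.r.t. `𝒯` when `x` is not an endpoint
of the `i`-th interval of any box of `𝒯`. -/
def Generic {d : ℕ} (𝒯 : Finset (Box d)) (i : Fin d) (x : ℝ) : Prop :=
  ∀ B ∈ 𝒯, (x : EReal) ≠ B.lo i ∧ (x : EReal) ≠ B.hi i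

/-- The slice `B|^(i)_x` of a box `B` by the hyperplane `H^(i)_x`, regarded
as a box of `ℝ^d` by omitting coordinate `i`. -/
def sliceBox {d : ℕ} (B : Box (d + 1)) (i : Fin (d + 1)) : Box d where
  lo j := B.lo (i.succAbove j)
  hi j := B.hi (i.succAbove j)

/-- The slice `T|^(i)_x` of a tiling by the hyperplane `H^(i)_x`. -/
def sliceT {d : ℕ} (𝒯 : Finset (Box (d + 1))) (i : Fin (d + 1)) (x : ℝ) :
    Finset (Box d) :=
  (𝒯.filter fun B => B.lo i ≤ (x : EReal) ∧ (x : EReal) ≤ B.hi i).image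
    fun B => sliceBox B i

/-- The box `B|^(i)-_x` (the nontrivial cases: if `B_i^+ < x` it is `B`
itself, and if `B_i^- < x ≤ B_i^+` the interval `B_i` is replaced by
`[B_i^-, 1]`; the empty case `x ≤ B_i^-` is filtered out in `cutMinus`). -/
def cutMinusBox {d : ℕ} (B : Box d) (i : Fin d) (x : ℝ) : Box d :=
  if B.hi i < (x : EReal) then B
  else ⟨B.lo, Function.update B.hi i ((1 : ℝ) : EReal)⟩

/-- The box `B|^(i)+_x` (the nontrivial cases: if `x < B_i^-` it is `B`
itself, and if `B_i^- ≤ x < B_i^+` the interval `B_i` is replaced by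
`[-1, B_i^+]`; the empty case `B_i^+ ≤ x` is filtered out in `cutPlus`). -/
def cutPlusBox {d : ℕ} (B : Box d) (i : Fin d) (x : ℝ) : Box d :=
  if (x : EReal) < B.lo i then B
  else ⟨Function.update B.lo i ((-1 : ℝ) : EReal), B.hi⟩

/-- The collection `T|^(i)-_x` of nonempty boxes `B|^(i)-_x`, `B ∈ T`. -/
def cutMinus {d : ℕ} (𝒯 : Finset (Box d)) (i : Fin d) (x : ℝ) :
    Finset (Box d) :=
  (𝒯.filter fun B => B.lo i < (x : EReal)).image fun B => cutMinusBox B i x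

/-- The collection `T|^(i)+_x` of nonempty boxes `B|^(i)+_x`, `B ∈ T`. -/
def cutPlus {d : ℕ} (𝒯 : Finset (Box d)) (i : Fin d) (x : ℝ) :
    Finset (Box d) :=
  (𝒯.filter fun B => (x : EReal) < B.hi i).image fun B => cutPlusBox B i x

/-- The side `S(B,i,-)` (for `s = false`) resp. `S(B,i,+)` (for `s = true`)
of a box `B`. -/
def sideBox {d : ℕ} (B : Box d) (i : Fin d) (s : Bool) : Box d where
  lo j := if j = i then (if s then B.hi i else B.lo i) else B.lo j
  hi j := if j = i then (if s then B.hi i else B.lo i) else B.hi j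

/-- The set of all sides of boxes of `T ∪ T_ext`. -/
def sides {d : ℕ} (𝒯 : Finset (Box d)) : Finset (Box d) :=
  ((withExt 𝒯) ×ˢ (Finset.univ : Finset (Fin d × Bool))).image
    fun q => sideBox q.1 q.2.1 q.2.2

/-- Two sides are linked when they intersect on a `(d-1)`-dimensional box. -/
def Linked {d : ℕ} (S S' : Box d) : Prop :=
  Intersects S S' ∧ interDim S S' = d - 1

/-- The linking relation, restricted to the sides of `T ∪ T_ext`. -/
def linkRel {d : ℕ} (𝒯 : Finset (Box d)) (S S' : Box d) : Prop :=
  S ∈ sides 𝒯 ∧ S' ∈ sides 𝒯 ∧ Linked S S'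

/-- The `∼`-equivalence class of a side (sides reachable by chains of linked
sides). -/
def sepClass {d : ℕ} (𝒯 : Finset (Box d)) (S₀ : Box d) : Set (Box d) :=
  {S | Relation.ReflTransGen (linkRel 𝒯) S₀ S}

/-- The separation generated by a side `S₀`: the union of the sides in its
`∼`-equivalence class. -/
def sepSet {d : ℕ} (𝒯 : Finset (Box d)) (S₀ : Box d) : Set (Fin d → ℝ) :=
  ⋃ S ∈ sepClass 𝒯 S₀, S.toSet

/-- `S` is degenerate in dimension `i` with value `x`, i.e. it is contained in
the hyperplane `H^(i)_x`. -/
def DegenAt {d : ℕ} (S : Box d) (i : Fin d) (x : ℝ) : Prop :=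
  S.lo i = (x : EReal) ∧ S.hi i = (x : EReal)

/-- A tiling is in general position when no two distinct separations are
coplanar: any two sides whose separations lie in a common hyperplane
`H^(i)_x` are `∼`-equivalent. -/
def GeneralPosition {d : ℕ} (𝒯 : Finset (Box d)) : Prop :=
  ∀ S₀ ∈ sides 𝒯, ∀ S₁ ∈ sides 𝒯, ∀ (i : Fin d) (x : ℝ),
    DegenAt S₀ i x → DegenAt S₁ i x →
      Relation.ReflTransGen (linkRel 𝒯) S₀ S₁

/-- The dimension of the intersection `⋂_{B ∈ 𝓑} B` of a finite family of
boxes: the number of coordinates where the intersected interval is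
non-degenerate. -/
def interDimAll {d : ℕ} (𝓑 : Finset (Box d)) : ℕ :=
  (Finset.univ.filter fun i =>
    𝓑.sup (fun B => B.lo i) < 𝓑.inf (fun B => B.hi i)).card

/-- The digraph `G(T)`: an arc from `A` to `B` (for distinct `A, B ∈ T`) iff
`B_i^- < A_i^+` for all `i`. -/
def tilingArc {d : ℕ} (𝒯 : Finset (Box d)) (A B : Box d) : Prop :=
  A ∈ 𝒯 ∧ B ∈ 𝒯 ∧ A ≠ B ∧ ∀ i, B.lo i < A.hi i


/-! Push `p` slightly off `A` across its `i`-th facet while moving it into the interior of `A`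
in all other coordinates. A box `B` of `T ∪ T_ext` containing the new point `q` also contains `p`
(finitely many closed boxes), meets `A` non-degenerately in every coordinate `j ≠ i`, and differs
from `A` since `q ∉ A`; disjointness of interiors then forces `A_i ∩ B_i` to be degenerate. -/

open Filter Topology

lemma max_lt_min_of_mem_Ioo_of_mem_Icc {α : Type*} [LinearOrder α] {a₁ a₂ b₁ b₂ x : α}
    (ha : x ∈ Set.Ioo a₁ a₂) (hb : x ∈ Set.Icc b₁ b₂) (hb₁₂ : b₁ < b₂) :
    max a₁ b₁ < min a₂ b₂ :=
  max_lt (lt_min (ha.1.trans ha.2) (ha.1.trans_le hb.2))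
    (lt_min (hb.1.trans_lt ha.2) hb₁₂)

lemma EReal.coe_add_mul_sub_mem_Ioo {l h : EReal} {x a t : ℝ} (hx : (x : EReal) ∈ Set.Icc l h)
    (ha : (a : EReal) ∈ Set.Ioo l h) (ht : t ∈ Set.Ioc (0 : ℝ) 1) :
    ((x + t * (a - x) : ℝ) : EReal) ∈ Set.Ioo l h := by
  obtain ⟨ht₀, ht₁⟩ := ht
  constructor
  · rcases lt_or_ge x a with hxa | hax
    · exact hx.1.trans_lt (EReal.coe_lt_coe_iff.2 (by nlinarith))
    · exact ha.1.trans_le (EReal.coe_le_coe_iff.2 (by nlinarith))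
  · rcases lt_or_ge a x with hax | hxa
    · exact (EReal.coe_lt_coe_iff.2 (by nlinarith)).trans_le hx.2
    · exact (EReal.coe_le_coe_iff.2 (by nlinarith)).trans_lt ha.2

lemma EReal.coe_add_mul_sub_notMem_Icc {l h : EReal} {x a t : ℝ}
    (hx : (x : EReal) = l ∨ (x : EReal) = h) (ha : (a : EReal) ∈ Set.Ioo l h) (ht : 0 < t) :
    ((x + t * (x - a) : ℝ) : EReal) ∉ Set.Icc l h := by
  rintro ⟨hl, hh⟩
  rcases hx with rfl | rfl
  · have hxa : x < a := EReal.coe_lt_coe_iff.1 ha.1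
    have := EReal.coe_le_coe_iff.1 hl
    nlinarith
  · have hax : a < x := EReal.coe_lt_coe_iff.1 ha.2
    have := EReal.coe_le_coe_iff.1 hh
    nlinarith

namespace Box

variable {d : ℕ}

lemma interior_subset_toSet (B : Box d) : B.interior ⊆ B.toSet :=
  fun _ hx j => ⟨(hx j).1.le, (hx j).2.le⟩

lemma isClosed_toSet (B : Box d) : IsClosed B.toSet := by
  have hcoord : ∀ j, Continuous fun x : Fin d → ℝ => ((x j : ℝ) : EReal) :=
    fun j => continuous_coe_real_ereal.comp (continuous_apply j)
  simp only [toSet, mem, Set.ofPred_forall, Set.ofPred_and]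
  exact isClosed_iInter fun j =>
    (isClosed_le continuous_const (hcoord j)).inter (isClosed_le (hcoord j) continuous_const)

lemma interior_inter_nonempty {A B : Box d}
    (h : ∀ j, max (A.lo j) (B.lo j) < min (A.hi j) (B.hi j)) :
    (A.interior ∩ B.interior).Nonempty := by
  choose x hx₁ hx₂ using fun j => EReal.exists_between_coe_real (h j)
  exact ⟨x, fun j => ⟨(max_lt_iff.1 (hx₁ j)).1, (lt_min_iff.1 (hx₂ j)).1⟩,
    fun j => ⟨(max_lt_iff.1 (hx₁ j)).2, (lt_min_iff.1 (hx₂ j)).2⟩⟩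

lemma eventually_forall_mem_imp_mem (S : Finset (Box d)) (p : Fin d → ℝ) :
    ∀ᶠ x in 𝓝 p, ∀ B ∈ S, B.mem x → B.mem p := by
  refine (eventually_all_finset S).2 fun B _ => ?_
  by_cases hp : B.mem p
  · exact Eventually.of_forall fun _ _ => hp
  · filter_upwards [B.isClosed_toSet.isOpen_compl.mem_nhds hp] with x hx h using absurd h hx

lemma exists_push_off {A : Box d} (hA : A.FullDim) {p : Fin d → ℝ} (hp : A.mem p) {i : Fin d}
    (hi : (p i : EReal) = A.lo i ∨ (p i : EReal) = A.hi i) (S : Finset (Box d)) :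
    ∃ q : Fin d → ℝ, (∀ j ≠ i, (q j : EReal) ∈ Set.Ioo (A.lo j) (A.hi j)) ∧ ¬ A.mem q ∧
      ∀ B ∈ S, B.mem q → B.mem p := by
  obtain ⟨a, ha, -⟩ := interior_inter_nonempty (A := A) (B := A) fun j => by simpa using hA j
  let c : Fin d → ℝ := Function.update (a - p) i (p i - a i)
  have hpath : Tendsto (fun t : ℝ => p + t • c) (𝓝[>] 0) (𝓝 p) :=
    ((continuous_const.add (continuous_id.smul continuous_const)).tendsto' 0 p
      (by simp)).mono_left nhdsWithin_le_nhds
  obtain ⟨t, hnear, ht⟩ :=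
    ((hpath.eventually (eventually_forall_mem_imp_mem S p)).and (Ioc_mem_nhdsGT one_pos)).exists
  refine ⟨p + t • c, fun j hj => ?_, fun h => ?_, hnear⟩
  · simpa [c, hj] using EReal.coe_add_mul_sub_mem_Ioo (hp j) (ha j) ht
  · exact EReal.coe_add_mul_sub_notMem_Icc hi (ha i) ht.1 (by simpa [c] using h i)

end Box

lemma interDim_eq_sub_one {d : ℕ} {A B : Box d} {i : Fin d}
    (hne : ∀ j ≠ i, max (A.lo j) (B.lo j) < min (A.hi j) (B.hi j))
    (heq : max (A.lo i) (B.lo i) = min (A.hi i) (B.hi i)) : interDim A B = d - 1 := by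
  have hfilter : (Finset.univ.filter fun j => max (A.lo j) (B.lo j) < min (A.hi j) (B.hi j)) =
      Finset.univ.erase i := by
    ext j
    simp only [Finset.mem_filter, Finset.mem_univ, true_and, Finset.mem_erase, ne_eq, and_true]
    exact ⟨fun hlt hj => hlt.ne (hj ▸ heq), hne j⟩
  rw [interDim, hfilter, Finset.card_erase_of_mem (Finset.mem_univ i), Finset.card_univ,
    Fintype.card_fin]

lemma extBox_fullDim (d : ℕ) (i : Fin d) (s : Bool) : (extBox d i s).FullDim := by
  intro j
  cases s <;> simp only [extBox] <;> split_ifs <;>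
    first
    | exact EReal.coe_lt_coe_iff.2 (by norm_num)
    | exact EReal.coe_lt_top _
    | exact EReal.bot_lt_coe _
    | exact bot_lt_top

lemma mem_extBox {d : ℕ} {i : Fin d} {s : Bool} {q : Fin d → ℝ}
    (hlt : ∀ j < i, -1 ≤ q j ∧ q j ≤ 1) (hi : if s then 1 ≤ q i else q i ≤ -1) :
    (extBox d i s).mem q := by
  intro j
  rcases lt_trichotomy j i with hj | rfl | hj
  · simp only [extBox, if_pos hj]
    exact_mod_cast hlt j hj
  · cases s <;> simp only [extBox, lt_irrefl, if_false, if_true, Bool.false_eq_true] at hi ⊢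
    · exact ⟨bot_le, EReal.coe_le_coe_iff.2 hi⟩
    · exact ⟨EReal.coe_le_coe_iff.2 hi, le_top⟩
  · simp [extBox, hj.ne', not_lt.2 hj.le]

lemma extBox_interior_disjoint_cube (d : ℕ) (i : Fin d) (s : Bool) :
    Disjoint (extBox d i s).interior (cube d) := by
  rw [Set.disjoint_left]
  intro x hx hcube
  have hxi := hx i
  cases s <;> simp only [extBox, lt_irrefl, if_false, if_true, Bool.false_eq_true] at hxi
  · linarith [EReal.coe_lt_coe_iff.1 hxi.2, (hcube i).1]
  · linarith [EReal.coe_lt_coe_iff.1 hxi.1, (hcube i).2]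

namespace IsTiling

variable {d : ℕ} {𝒯 : Finset (Box d)}

lemma fullDim_of_mem_withExt (hT : IsTiling 𝒯) {B : Box d} (hB : B ∈ withExt 𝒯) :
    B.FullDim := by
  rcases Finset.mem_union.1 hB with hB | hB
  · exact hT.1 B hB
  · obtain ⟨⟨k, s⟩, -, rfl⟩ := Finset.mem_image.1 hB
    exact extBox_fullDim d k s

lemma interior_inter_eq_empty (hT : IsTiling 𝒯) {A B : Box d} (hA : A ∈ 𝒯)
    (hB : B ∈ withExt 𝒯) (hAB : A ≠ B) : A.interior ∩ B.interior = ∅ := by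
  rcases Finset.mem_union.1 hB with hB | hB
  · exact hT.2.2.1 A hA B hB hAB
  · obtain ⟨⟨k, s⟩, -, rfl⟩ := Finset.mem_image.1 hB
    have hAcube : A.interior ⊆ cube d := A.interior_subset_toSet.trans (hT.2.1 A hA)
    exact Set.disjoint_iff_inter_eq_empty.1
      ((extBox_interior_disjoint_cube d k s).symm.mono_left hAcube)

lemma exists_mem_withExt (hT : IsTiling 𝒯) (q : Fin d → ℝ) : ∃ B ∈ withExt 𝒯, B.mem q := by
  by_cases hq : q ∈ cube d
  · obtain ⟨B, hB, hqB⟩ := hT.2.2.2 q hq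
    exact ⟨B, Finset.mem_union_left _ hB, hqB⟩
  -- the first coordinate of `q` outside `[-1, 1]` selects the exterior box
  obtain ⟨i, hi, hmin⟩ :=
    wellFounded_lt.has_min {j | ¬(-1 ≤ q j ∧ q j ≤ 1)} (not_forall.1 hq)
  have hlt : ∀ j < i, -1 ≤ q j ∧ q j ≤ 1 := fun j hj => by_contra fun h => hmin j h hj
  have hext : ∀ s, extBox d i s ∈ withExt 𝒯 := fun s =>
    Finset.mem_union_right _ (Finset.mem_image.2 ⟨(i, s), Finset.mem_univ _, rfl⟩)
  by_cases h1 : 1 ≤ q i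
  · exact ⟨_, hext true, mem_extBox hlt (by simpa using h1)⟩
  · have : q i ≤ -1 := by
      by_contra h
      exact hi ⟨by linarith, by linarith⟩
    exact ⟨_, hext false, mem_extBox hlt (by simpa using this)⟩

lemma max_lo_eq_min_hi (hT : IsTiling 𝒯) {A B : Box d} (hA : A ∈ 𝒯) (hB : B ∈ withExt 𝒯)
    {p q : Fin d → ℝ} (hpA : A.mem p) (hpB : B.mem p) (hqA : ¬ A.mem q) (hqB : B.mem q)
    {i : Fin d} (hne : ∀ j ≠ i, max (A.lo j) (B.lo j) < min (A.hi j) (B.hi j)) :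
    max (A.lo i) (B.lo i) = min (A.hi i) (B.hi i) := by
  refine le_antisymm ((max_le (hpA i).1 (hpB i).1).trans (le_min (hpA i).2 (hpB i).2))
    (not_lt.1 fun hlt => ?_)
  have hall : ∀ j, max (A.lo j) (B.lo j) < min (A.hi j) (B.hi j) := fun j =>
    if hj : j = i then hj ▸ hlt else hne j hj
  have hAB : A ≠ B := by
    rintro rfl
    exact hqA hqB
  exact (Box.interior_inter_nonempty hall).ne_empty (hT.interior_inter_eq_empty hA hB hAB)

end IsTiling

/-- In a `d`-tiling `T`, for any `A ∈ T` and any point `p ∈ A`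
with `p_i = A_i^-` or `p_i = A_i^+`, there is a box `B ∈ T ∪ T_ext` such that
`p ∈ A ∩ B` and such that `A_j ∩ B_j` is degenerate only for `j = i`;
in particular `dim(A ∩ B) = d - 1`. -/
theorem stmt0 (d : ℕ) (𝒯 : Finset (Box d)) (hT : IsTiling 𝒯)
    (A : Box d) (hA : A ∈ 𝒯) (p : Fin d → ℝ) (hp : A.mem p) (i : Fin d)
    (hi : (p i : EReal) = A.lo i ∨ (p i : EReal) = A.hi i) :
    ∃ B ∈ withExt 𝒯, B.mem p ∧
      (∀ j, max (A.lo j) (B.lo j) = min (A.hi j) (B.hi j) ↔ j = i) ∧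
      interDim A B = d - 1 := by
  obtain ⟨q, hqIoo, hqA, hnear⟩ := Box.exists_push_off (hT.1 A hA) hp hi (withExt 𝒯)
  obtain ⟨B, hB, hqB⟩ := hT.exists_mem_withExt q
  have hpB := hnear B hB hqB
  have hne : ∀ j ≠ i, max (A.lo j) (B.lo j) < min (A.hi j) (B.hi j) := fun j hj =>
    max_lt_min_of_mem_Ioo_of_mem_Icc (hqIoo j hj) (hqB j) (hT.fullDim_of_mem_withExt hB j)
  have heq := hT.max_lo_eq_min_hi hA hB hp hpB hqA hqB hne
  refine ⟨B, hB, hpB, fun j => ⟨fun h => by_contra fun hj => (hne j hj).ne h, ?_⟩,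
    interDim_eq_sub_one hne heq⟩
  rintro rfl
  exact heq

end
end

section
/- (Zaks) Let 𝓑 be a finite set of d-dimensional d-boxes with a common point, i.e. ⋂_{B ∈ 𝓑} B ≠ ∅. If for every pair of distinct boxes A, B ∈ 𝓑 we have dim(A ∩ B) = d − 1, then |𝓑| ≤ d + 1. -/
/- Common framework: axis-parallel boxes (with extended-real endpoints, to
accommodate the unbounded exterior boxes of `T_ext`), `d`-tilings of the cube
`[-1,1]^d`, the exterior boxes, proper tilings, slices, cuts, sides and
separations. -/

noncomputable section

open Classical

attribute [local instance] Classical.propDecidable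

/-! The key fact is the Graham–Pollak theorem: if the edges of the complete graph on `n` vertices
are partitioned into `m` complete bipartite graphs, then `n ≤ m + 1`. Its proof: the vectors
`v_a ∈ ℝ^m` with `(v_a)_k = 1` iff `a` is on the left side of biclique `k` are affinely
independent: for an affine relation `w`, the form `(∑ w)² - ∑ w² = ∑_{a ≠ b} w_a w_b` splits,
edge by edge, into a sum over the bicliques of products (left sum of `w`) · (right sum of `w`),
all zero.

For boxes through a common point `p`, call `B` a left (right) box in coordinate `k` when
`B_k^- = p_k` (`B_k^+ = p_k`). Two such boxes meet in a degenerate interval in coordinate `k`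
exactly when one is left and the other right there, so the hypothesis says that these
left/right pairs, one biclique per coordinate, partition the pairs of boxes. -/

open Finset

section GrahamPollak

variable {α κ : Type*} [Fintype κ]

/-- The complete bipartite graphs between `{a | L a k}` and `{a | H a k}`, `k : κ`, partition the
edges of the complete graph on `α` (and no vertex lies on both sides of a biclique). -/
def IsBicliquePartition (L H : α → κ → Prop) : Prop :=
  ∀ a b, #{k | L a k ∧ H b k} + #{k | L b k ∧ H a k} = if a = b then 0 else 1

theorem sum_sum_mul_card_filter_and (L H : α → κ → Prop) (t : Finset α) (w : α → ℝ) :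
    ∑ a ∈ t, ∑ b ∈ t, w a * w b * #{k | L a k ∧ H b k}
      = ∑ k, (∑ a ∈ t with L a k, w a) * ∑ b ∈ t with H b k, w b := by
  have hterm : ∀ a b, w a * w b * #{k | L a k ∧ H b k}
      = ∑ k, (if L a k then w a else 0) * (if H b k then w b else 0) := fun a b => by
    rw [card_filter, Nat.cast_sum, mul_sum]
    refine sum_congr rfl fun k _ => ?_
    split_ifs <;> simp_all
  simp only [hterm, sum_filter, sum_mul_sum]
  exact (sum_congr rfl fun a _ => sum_comm).trans sum_comm

namespace IsBicliquePartition

variable {L H : α → κ → Prop}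

theorem sum_sq_eq_zero (hLH : IsBicliquePartition L H) (t : Finset α) (w : α → ℝ)
    (hsum : ∑ a ∈ t, w a = 0) (hL : ∀ k, ∑ a ∈ t with L a k, w a = 0) :
    ∑ a ∈ t, w a ^ 2 = 0 := by
  have cross : ∑ a ∈ t, ∑ b ∈ t, w a * w b * #{k | L a k ∧ H b k} = 0 := by
    simp [sum_sum_mul_card_filter_and, hL]
  have offDiag : ∑ a ∈ t, ∑ b ∈ t, w a * w b * ((if a = b then 0 else 1 : ℕ) : ℝ) = 0 := by
    have hcount : ∀ a b, ((if a = b then 0 else 1 : ℕ) : ℝ)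
        = #{k | L a k ∧ H b k} + #{k | L b k ∧ H a k} := fun a b => by
      rw [← hLH a b, Nat.cast_add]
    simp_rw [hcount, mul_add, sum_add_distrib]
    rw [cross, zero_add, Finset.sum_comm]
    exact (sum_congr rfl fun b _ => sum_congr rfl fun a _ => by ring).trans cross
  calc ∑ a ∈ t, w a ^ 2
      = (∑ a ∈ t, w a) * (∑ b ∈ t, w b)
          - ∑ a ∈ t, ∑ b ∈ t, w a * w b * ((if a = b then 0 else 1 : ℕ) : ℝ) := by
        rw [sum_mul_sum, ← sum_sub_distrib]
        refine sum_congr rfl fun a ha => ?_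
        rw [← sum_sub_distrib, sum_eq_single_of_mem a ha fun b _ hba => by simp [Ne.symm hba]]
        simp [sq]
    _ = 0 := by rw [hsum, offDiag, zero_mul, sub_zero]

theorem affineIndependent (hLH : IsBicliquePartition L H) :
    AffineIndependent ℝ fun a k => if L a k then (1 : ℝ) else 0 := by
  rw [affineIndependent_iff]
  intro t w hsum hcomb a ha
  have hL : ∀ k, ∑ a ∈ t with L a k, w a = 0 := fun k => by
    simpa [Finset.sum_apply, sum_filter] using congrFun hcomb k
  have hsq := hLH.sum_sq_eq_zero t w hsum hL
  exact pow_eq_zero_iff two_ne_zero |>.mp <|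
    (sum_eq_zero_iff_of_nonneg fun b _ => sq_nonneg (w b)).mp hsq a ha

/-- The Graham–Pollak theorem. -/
theorem card_le_card_add_one [Fintype α] (hLH : IsBicliquePartition L H) :
    Fintype.card α ≤ Fintype.card κ + 1 := by
  refine hLH.affineIndependent.card_le_finrank_succ.trans (Nat.add_le_add_right ?_ 1)
  exact (Submodule.finrank_le _).trans_eq (Module.finrank_fintype_fun_eq_card ℝ)

end IsBicliquePartition

end GrahamPollak

theorem min_le_max_iff_of_mem_Icc {β : Type*} [LinearOrder β] {a b c e x : β}
    (hab : a < b) (hce : c < e) (hxab : x ∈ Set.Icc a b) (hxce : x ∈ Set.Icc c e) :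
    min b e ≤ max a c ↔ a = x ∧ e = x ∨ c = x ∧ b = x := by
  obtain ⟨hax, hxb⟩ := hxab
  obtain ⟨hcx, hxe⟩ := hxce
  constructor
  · intro h
    rcases le_total a c with h1 | h1 <;> rcases le_total b e with h2 | h2 <;>
      simp only [max_eq_left, max_eq_right, min_eq_left, min_eq_right, h1, h2] at h <;>
      grind
  · rintro (⟨rfl, rfl⟩ | ⟨rfl, rfl⟩)
    · exact (min_le_right _ _).trans (le_max_left _ _)
    · exact (min_le_left _ _).trans (le_max_right _ _)

namespace Box

variable {d : ℕ}

instance : Subsingleton (Box 0) :=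
  ⟨fun A B => by cases A; cases B; congr <;> exact Subsingleton.elim _ _⟩

theorem interDim_self {B : Box d} (hB : B.FullDim) : interDim B B = d := by
  simp [interDim, filter_true_of_mem fun i _ => hB i]

theorem card_crossings_add_interDim {A B : Box d} (hA : A.FullDim) (hB : B.FullDim)
    {p : Fin d → ℝ} (hpA : A.mem p) (hpB : B.mem p) :
    #{k | A.lo k = p k ∧ B.hi k = p k} + #{k | B.lo k = p k ∧ A.hi k = p k} + interDim A B
      = d := by
  have hdegen : univ.filter (fun k => ¬ max (A.lo k) (B.lo k) < min (A.hi k) (B.hi k))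
      = univ.filter (fun k => A.lo k = p k ∧ B.hi k = p k)
        ∪ univ.filter (fun k => B.lo k = p k ∧ A.hi k = p k) := by
    ext k
    simp only [mem_filter, mem_univ, true_and, mem_union, not_lt]
    exact min_le_max_iff_of_mem_Icc (hA k) (hB k) (hpA k) (hpB k)
  have hdisj : Disjoint (univ.filter fun k => A.lo k = p k ∧ B.hi k = p k)
      (univ.filter fun k => B.lo k = p k ∧ A.hi k = p k) := by
    refine disjoint_filter.mpr fun k _ h₁ h₂ => (hA k).ne ?_
    rw [h₁.1, h₂.2]
  rw [← card_union_of_disjoint hdisj, ← hdegen, interDim, add_comm,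
    card_filter_add_card_filter_not, card_univ, Fintype.card_fin]

end Box

/-- Zaks: If a finite set `𝓑` of `d`-dimensional `d`-boxes has a
common point and every two distinct boxes of `𝓑` intersect on a
`(d-1)`-dimensional box, then `|𝓑| ≤ d + 1`. -/
theorem stmt3 (d : ℕ) (𝓑 : Finset (Box d)) (hfull : ∀ B ∈ 𝓑, B.FullDim)
    (hcommon : ∃ p : Fin d → ℝ, ∀ B ∈ 𝓑, B.mem p)
    (hpair : ∀ A ∈ 𝓑, ∀ B ∈ 𝓑, A ≠ B → interDim A B = d - 1) :
    𝓑.card ≤ d + 1 := by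
  obtain ⟨p, hp⟩ := hcommon
  have hpart : IsBicliquePartition (fun (B : 𝓑) k => B.1.lo k = p k)
      (fun (B : 𝓑) k => B.1.hi k = p k) := by
    intro A B
    dsimp only
    have hcount :=
      Box.card_crossings_add_interDim (hfull A A.2) (hfull B B.2) (hp A A.2) (hp B B.2)
    split_ifs with hAB
    · subst hAB
      rw [Box.interDim_self (hfull A A.2)] at hcount
      omega
    · have hAB' : A.1 ≠ B.1 := Subtype.coe_injective.ne hAB
      have hd : d ≠ 0 := by
        rintro rfl
        exact hAB' (Subsingleton.elim _ _)
      have := hpair A A.2 B B.2 hAB'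
      omega
  simpa using hpart.card_le_card_add_one

end
end
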